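/- arXiv:2405.05951 — 7 statements merged into one kernel-verified Lean document; each statement's English description precedes it below -/
import Mathlib

section
/- Let A be Hurwitz, and let P solve A P + P Aᵀ + B Bᵀ = 0. Then the unique solution Q of the Lyapunov equation Aᵀ Q + Q A + Cᵀ C + Σ_{k=1}^p M_k P M_k = 0 admits the representation Q = ∫₀^∞ e^{Aᵀτ} Cᵀ C e^{Aτ} dτ + Σ_{k=1}^p ∫₀^∞ ∫₀^∞ (e^{Aᵀτ₁} M_k e^{Aτ₂} B)(e^{Aᵀτ₁} M_k e^{Aτ₂} B)ᵀ dτ₁ dτ₂. -/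
open Matrix MeasureTheory

/-- A real square matrix is Hurwitz if all of its (complex) eigenvalues have
negative real part. -/
def IsHurwitz {n : ℕ} (A : Matrix (Fin n) (Fin n) ℝ) : Prop :=
  ∀ μ ∈ spectrum ℂ (A.map (algebraMap ℝ ℂ)), μ.re < 0

/-!
Both Gramians solve Sylvester equations `a x + x b + c = 0` in which `t ↦ exp (t • a)` and
`t ↦ exp (t • b)` decay exponentially. For such an equation the derivative of
`t ↦ exp (t • a) * x * exp (t • b)` is `-(exp (t • a) * c * exp (t • b))`, and integrating it over
`(0, ∞)` gives `x = ∫₀^∞ exp (t • a) * c * exp (t • b)`. Exponential decay of `exp (t • A)` for a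
Hurwitz matrix `A` comes from the generalized eigenspace decomposition over `ℂ`: on the generalized
eigenspace of `μ`, `exp (t • A) v` is `exp (t μ)` times a polynomial in `t`.

With `(a, b) = (A, Aᵀ)` this represents `P`; with `(a, b) = (Aᵀ, A)` it represents `Q`. The inner
`τ₂`-integral is `exp (τ₁ • Aᵀ) * M k * P * M k * exp (τ₁ • A)` by the representation of `P`, and
the integral representing `Q` is linear in `c = Cᵀ C + ∑ₖ M k P M k`.
-/

open NormedSpace Set Filter Topology Asymptotics
open scoped Nat

theorem integrableOn_Ioi_of_isBigO_exp {E : Type*} [NormedAddCommGroup E] {f : ℝ → E} {a s : ℝ}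
    (hs : s < 0) (hf : ContinuousOn f (Ici a)) (ho : f =O[atTop] fun t => Real.exp (s * t)) :
    IntegrableOn f (Ioi a) :=
  ((hf.locallyIntegrableOn measurableSet_Ici).integrableOn_of_isBigO_atTop ho
    ⟨Ioi 0, Ioi_mem_atTop 0, by simpa using exp_neg_integrableOn_Ioi 0 (neg_pos.2 hs)⟩).mono_set
    Ioi_subset_Ici_self

theorem tendsto_zero_of_isBigO_exp {E : Type*} [NormedAddCommGroup E] {f : ℝ → E} {s : ℝ}
    (hs : s < 0) (ho : f =O[atTop] fun t => Real.exp (s * t)) : Tendsto f atTop (𝓝 0) :=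
  ho.trans_tendsto <| Real.tendsto_exp_atBot.comp <| tendsto_id.const_mul_atTop_of_neg hs

theorem isBigO_pow_mul_exp_of_lt {r s : ℝ} (h : r < s) (j : ℕ) :
    (fun t : ℝ => t ^ j * Real.exp (r * t)) =O[atTop] fun t => Real.exp (s * t) := by
  have := (isLittleO_pow_exp_pos_mul_atTop j (sub_pos.2 h)).isBigO.mul
    (isBigO_refl (fun t => Real.exp (r * t)) atTop)
  simpa [← Real.exp_add, sub_mul] using this

theorem integral_mul_mul_of_integrable {X 𝔸 : Type*} [MeasurableSpace X] {μ : Measure X}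
    [NormedRing 𝔸] [NormedAlgebra ℝ 𝔸] {f : X → 𝔸} (hf : Integrable f μ) (u v : 𝔸) :
    ∫ x, u * f x * v ∂μ = u * (∫ x, f x ∂μ) * v := by
  rw [integral_mul_const_of_integrable (hf.const_mul u), integral_const_mul_of_integrable hf]

section Sylvester

variable {𝔸 : Type*} [NormedRing 𝔸] [NormedAlgebra ℝ 𝔸]

def HasExpDecay (a : 𝔸) : Prop :=
  ∃ s < 0, (fun t : ℝ => exp (t • a)) =O[atTop] fun t => Real.exp (s * t)

theorem HasExpDecay.exists_isBigO_exp_mul_mul_exp {a b : 𝔸} (ha : HasExpDecay a)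
    (hb : HasExpDecay b) (c : 𝔸) :
    ∃ s < 0, (fun t : ℝ => exp (t • a) * c * exp (t • b)) =O[atTop] fun t => Real.exp (s * t) := by
  obtain ⟨r, hr, hra⟩ := ha
  obtain ⟨s, hs, hsb⟩ := hb
  refine ⟨r + s, by linarith, ?_⟩
  have := (hra.mul (isBigO_const_const c one_ne_zero atTop)).mul hsb
  simpa [add_mul, Real.exp_add] using this

variable [CompleteSpace 𝔸]

theorem hasDerivAt_exp_mul_mul_exp (a b x : 𝔸) (t : ℝ) :
    HasDerivAt (fun t : ℝ => exp (t • a) * x * exp (t • b))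
      (exp (t • a) * (a * x + x * b) * exp (t • b)) t := by
  have ha : Commute a (exp (t • a)) := ((Commute.refl a).smul_right t).exp_right
  have hb : Commute b (exp (t • b)) := ((Commute.refl b).smul_right t).exp_right
  refine (((hasDerivAt_exp_smul_const' a t).mul_const x).mul
    (hasDerivAt_exp_smul_const b t)).congr_deriv ?_
  rw [ha.eq, ← hb.eq]
  noncomm_ring

theorem continuous_exp_mul_mul_exp (a b c : 𝔸) :
    Continuous fun t : ℝ => exp (t • a) * c * exp (t • b) :=
  continuous_iff_continuousAt.2 fun t => (hasDerivAt_exp_mul_mul_exp a b c t).continuousAt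

theorem HasExpDecay.integrableOn_exp_mul_mul_exp {a b : 𝔸} (ha : HasExpDecay a)
    (hb : HasExpDecay b) (c : 𝔸) :
    IntegrableOn (fun t : ℝ => exp (t • a) * c * exp (t • b)) (Ioi 0) := by
  obtain ⟨s, hs, ho⟩ := ha.exists_isBigO_exp_mul_mul_exp hb c
  exact integrableOn_Ioi_of_isBigO_exp hs (continuous_exp_mul_mul_exp a b c).continuousOn ho

theorem HasExpDecay.eq_integral_of_mul_add_mul_add_eq_zero {a b c x : 𝔸} (ha : HasExpDecay a)
    (hb : HasExpDecay b) (h : a * x + x * b + c = 0) :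
    x = ∫ t in Ioi (0 : ℝ), exp (t • a) * c * exp (t • b) := by
  obtain ⟨s, hs, ho⟩ := ha.exists_isBigO_exp_mul_mul_exp hb x
  have hderiv : ∀ t ∈ Ici (0 : ℝ), HasDerivAt (fun t : ℝ => exp (t • a) * x * exp (t • b))
      (-(exp (t • a) * c * exp (t • b))) t := fun t _ => by
    simpa [eq_neg_of_add_eq_zero_left h] using hasDerivAt_exp_mul_mul_exp a b x t
  have := integral_Ioi_of_hasDerivAt_of_tendsto' hderiv
    (ha.integrableOn_exp_mul_mul_exp hb c).neg (tendsto_zero_of_isBigO_exp hs ho)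
  simpa [integral_neg] using this.symm

end Sylvester

attribute [local instance] Matrix.linftyOpNormedRing Matrix.linftyOpNormedAlgebra

section Decay

variable {ι : Type*} [Fintype ι] [DecidableEq ι]

theorem exp_mulVec_eq_sum_of_pow_mulVec_eq_zero {𝕜 : Type*} [RCLike 𝕜] {N : Matrix ι ι 𝕜}
    {v : ι → 𝕜} {K : ℕ} (hv : (N ^ K) *ᵥ v = 0) :
    exp N *ᵥ v = ∑ j ∈ Finset.range K, (j !⁻¹ : 𝕜) • (N ^ j *ᵥ v) := by
  have hsum : HasSum (fun j => ((j !⁻¹ : 𝕜) • N ^ j) *ᵥ v) (exp N *ᵥ v) :=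
    (exp_series_hasSum_exp' N).map (mulVec.addMonoidHomLeft v)
      (continuous_id.matrix_mulVec continuous_const)
  simp only [smul_mulVec] at hsum
  refine hsum.unique (hasSum_sum_of_ne_finset_zero fun j hj => ?_)
  rw [← Nat.sub_add_cancel (not_lt.1 (mt Finset.mem_range.2 hj)), pow_add, ← mulVec_mulVec, hv,
    mulVec_zero, smul_zero]

theorem exp_smul_mulVec_eq_sum_of_pow_sub_mulVec_eq_zero {A : Matrix ι ι ℂ} {μ : ℂ} {v : ι → ℂ}
    {K : ℕ} (hv : ((A - μ • 1) ^ K) *ᵥ v = 0) (z : ℂ) :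
    exp (z • A) *ᵥ v =
      ∑ j ∈ Finset.range K, (Complex.exp (z * μ) * (z ^ j / j !)) • ((A - μ • 1) ^ j *ᵥ v) := by
  have hsplit : z • A = algebraMap ℂ _ (z * μ) + z • (A - μ • 1) := by
    rw [Algebra.algebraMap_eq_smul_one, smul_sub, smul_smul]
    abel
  have hzv : ((z • (A - μ • 1)) ^ K) *ᵥ v = 0 := by
    rw [smul_pow, smul_mulVec, hv, smul_zero]
  have hscalar : exp (algebraMap ℂ (Matrix ι ι ℂ) (z * μ)) = algebraMap ℂ _ (Complex.exp (z * μ)) :=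
    by rw [Complex.exp_eq_exp_ℂ]; exact (algebraMap_exp_comm _).symm
  rw [hsplit, Matrix.exp_add_of_commute _ _ (Algebra.commute_algebraMap_left _ _), hscalar,
    ← mulVec_mulVec, exp_mulVec_eq_sum_of_pow_mulVec_eq_zero hzv, Algebra.algebraMap_eq_smul_one,
    smul_mulVec, one_mulVec, Finset.smul_sum]
  refine Finset.sum_congr rfl fun j _ => ?_
  rw [smul_pow, smul_mulVec, smul_smul, smul_smul]
  ring_nf

theorem isBigO_exp_smul_mulVec_of_mem_maxGenEigenspace {A : Matrix ι ι ℂ} {μ : ℂ} {v : ι → ℂ}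
    (hv : v ∈ Module.End.maxGenEigenspace (toLin' A) μ) {s : ℝ} (hs : μ.re < s) :
    (fun t : ℝ => exp (t • A) *ᵥ v) =O[atTop] fun t => Real.exp (s * t) := by
  obtain ⟨K, hK⟩ := (Module.End.mem_maxGenEigenspace _ _ _).1 hv
  have hKv : ((A - μ • 1) ^ K) *ᵥ v = 0 := by
    have hsub : toLin' A - μ • 1 = toLinAlgEquiv' (A - μ • 1) := by
      rw [map_sub, map_smul, map_one]
      rfl
    rwa [hsub, ← map_pow, toLinAlgEquiv'_apply] at hK
  have hexp : (fun t : ℝ => exp (t • A) *ᵥ v) = fun t : ℝ => ∑ j ∈ Finset.range K,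
      (Complex.exp (t * μ) * (t ^ j / j !)) • ((A - μ • 1) ^ j *ᵥ v) := by
    funext t
    rw [← Complex.coe_smul, exp_smul_mulVec_eq_sum_of_pow_sub_mulVec_eq_zero hKv]
  rw [hexp]
  refine IsBigO.fun_sum fun j _ => ?_
  have hcoeff : (fun t : ℝ => Complex.exp (t * μ) * (t ^ j / j !)) =O[atTop]
      fun t => t ^ j * Real.exp (μ.re * t) := by
    refine isBigO_of_le' (c := 1) _ fun t => ?_
    have hfact : (1 : ℝ) ≤ j ! := by exact_mod_cast j.factorial_pos
    simp only [norm_mul, norm_div, norm_pow, Complex.norm_exp, Complex.re_ofReal_mul,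
      Complex.norm_real, Complex.norm_natCast, Real.norm_eq_abs, Real.abs_exp, one_mul]
    rw [mul_comm (Real.exp _), mul_comm t]
    exact mul_le_mul_of_nonneg_right (div_le_self (by positivity) hfact) (Real.exp_nonneg _)
  exact (isBigO_of_le' (c := ‖(A - μ • 1) ^ j *ᵥ v‖) _ fun t => by rw [norm_smul, mul_comm]).trans
    (hcoeff.trans (isBigO_pow_mul_exp_of_lt hs j))

theorem isBigO_exp_smul_mulVec_of_forall_re_lt {A : Matrix ι ι ℂ} {s : ℝ}
    (hA : ∀ μ ∈ spectrum ℂ A, μ.re < s) (v : ι → ℂ) :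
    (fun t : ℝ => exp (t • A) *ᵥ v) =O[atTop] fun t => Real.exp (s * t) := by
  have hv : v ∈ ⨆ μ, Module.End.maxGenEigenspace (toLin' A) μ := by
    rw [Module.End.iSup_maxGenEigenspace_eq_top]
    trivial
  refine Submodule.iSup_induction _ (motive := fun v =>
    (fun t : ℝ => exp (t • A) *ᵥ v) =O[atTop] fun t => Real.exp (s * t)) hv ?_ ?_ ?_
  · intro μ w hw
    rcases eq_or_ne w 0 with rfl | hw0
    · exact (isBigO_zero _ _).congr_left fun t => (mulVec_zero _).symm
    have hμ : Module.End.HasUnifEigenvalue (toLin' A) μ ⊤ := (Submodule.ne_bot_iff _).2 ⟨w, hw, hw0⟩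
    refine isBigO_exp_smul_mulVec_of_mem_maxGenEigenspace hw (hA μ ?_)
    simpa [spectrum_toLin'] using (hμ.lt zero_lt_one).mem_spectrum
  · exact (isBigO_zero _ _).congr_left fun t => (mulVec_zero _).symm
  · intro x y hx hy
    simpa [mulVec_add] using hx.add hy

theorem isBigO_of_forall_isBigO_entry {α : Type*} {l : Filter α} {F : α → Matrix ι ι ℝ}
    {g : α → ℝ} (h : ∀ i j, (fun x => F x i j) =O[l] g) : F =O[l] g := by
  have hF : F = fun x => ∑ i, ∑ j, F x i j • single i j (1 : ℝ) := funext fun x => by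
    simpa using matrix_eq_sum_single (F x)
  rw [hF]
  refine IsBigO.fun_sum fun i _ => IsBigO.fun_sum fun j _ => ?_
  exact (isBigO_of_le' (c := ‖single i j (1 : ℝ)‖) _ fun x => by rw [norm_smul, mul_comm]).trans
    (h i j)

theorem map_exp_algebraMap (A : Matrix ι ι ℝ) :
    (exp A).map (algebraMap ℝ ℂ) = exp (A.map (algebraMap ℝ ℂ)) :=
  map_exp (algebraMap ℝ ℂ).mapMatrix (continuous_id.matrix_map Complex.continuous_ofReal) A

theorem isBigO_exp_smul_of_forall_re_lt {A : Matrix ι ι ℝ} {s : ℝ}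
    (hA : ∀ μ ∈ spectrum ℂ (A.map (algebraMap ℝ ℂ)), μ.re < s) :
    (fun t : ℝ => exp (t • A)) =O[atTop] fun t => Real.exp (s * t) := by
  refine isBigO_of_forall_isBigO_entry fun i j => ?_
  have hentry : ∀ t : ℝ,
      ‖exp (t • A) i j‖ = ‖(exp (t • A.map (algebraMap ℝ ℂ)) *ᵥ Pi.single j 1) i‖ := fun t => by
    have hsmul : t • A.map (algebraMap ℝ ℂ) = (t • A).map (algebraMap ℝ ℂ) := by
      ext
      simp
    rw [mulVec_single_one, hsmul, ← map_exp_algebraMap]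
    simp
  exact (isBigO_of_le' (c := 1) _ fun t => (hentry t).trans_le <| (norm_le_pi_norm _ i).trans
    (one_mul _).ge).trans (isBigO_exp_smul_mulVec_of_forall_re_lt hA _)

end Decay

theorem IsHurwitz.transpose {n : ℕ} {A : Matrix (Fin n) (Fin n) ℝ} (hA : IsHurwitz A) :
    IsHurwitz Aᵀ := by
  intro μ hμ
  rw [transpose_map, mem_spectrum_iff_isRoot_charpoly, charpoly_transpose,
    ← mem_spectrum_iff_isRoot_charpoly] at hμ
  exact hA μ hμ

theorem IsHurwitz.hasExpDecay {n : ℕ} {A : Matrix (Fin n) (Fin n) ℝ} (hA : IsHurwitz A) :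
    HasExpDecay A := by
  obtain ⟨s, hsA, hs⟩ := (((eventually_all_finite (finite_spectrum _)).2 fun μ hμ =>
    (eventually_gt_nhds (hA μ hμ)).filter_mono nhdsWithin_le_nhds).and
      (self_mem_nhdsWithin : ∀ᶠ s in 𝓝[<] (0 : ℝ), s < 0)).exists
  exact ⟨s, hs, isBigO_exp_smul_of_forall_re_lt hsA⟩

section Gramian

variable {ι κ : Type*} [Fintype ι] [DecidableEq ι]

/- The topology of the ℓ∞-operator norm is not reducibly the product topology that `Matrix`
carries, so instance search does not find the `ContinuousENorm` that `Integrable` needs. -/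
noncomputable local instance : ContinuousENorm (Matrix ι ι ℝ) :=
  SeminormedAddGroup.toContinuousENorm

theorem integral_apply_apply {X : Type*} [MeasurableSpace X] {μ : Measure X}
    {F : X → Matrix ι ι ℝ} (hF : Integrable F μ) (i j : ι) :
    ∫ x, F x i j ∂μ = (∫ x, F x ∂μ) i j :=
  (entryLinearMap ℝ ℝ i j).toContinuousLinearMap.integral_comp_comm hF

theorem of_integral_apply {X : Type*} [MeasurableSpace X] {μ : Measure X}
    {F : X → Matrix ι ι ℝ} (hF : Integrable F μ) :
    (Matrix.of fun i j => ∫ x, F x i j ∂μ) = ∫ x, F x ∂μ := by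
  ext i j
  exact integral_apply_apply hF i j

/- The next three lemmas restate generic facts for matrices: the generic statements are elaborated
with the normed-ring instances, which `rw` does not identify with the instances of `Matrix`. -/
theorem HasExpDecay.of_integral_apply_exp_mul_mul_exp {A B : Matrix ι ι ℝ} (hA : HasExpDecay A)
    (hB : HasExpDecay B) (X : Matrix ι ι ℝ) :
    (Matrix.of fun i j => ∫ t in Ioi (0 : ℝ), (exp (t • A) * X * exp (t • B)) i j) =
      ∫ t in Ioi (0 : ℝ), exp (t • A) * X * exp (t • B) :=
  of_integral_apply (hA.integrableOn_exp_mul_mul_exp hB X)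

theorem HasExpDecay.integral_exp_mul_add_mul_exp {A B : Matrix ι ι ℝ} (hA : HasExpDecay A)
    (hB : HasExpDecay B) (X Y : Matrix ι ι ℝ) :
    ∫ t in Ioi (0 : ℝ), exp (t • A) * (X + Y) * exp (t • B) =
      (∫ t in Ioi (0 : ℝ), exp (t • A) * X * exp (t • B)) +
        ∫ t in Ioi (0 : ℝ), exp (t • A) * Y * exp (t • B) := by
  simp_rw [Matrix.mul_add, Matrix.add_mul]
  exact integral_add (hA.integrableOn_exp_mul_mul_exp hB X) (hA.integrableOn_exp_mul_mul_exp hB Y)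

theorem HasExpDecay.integral_exp_mul_sum_mul_exp {A B : Matrix ι ι ℝ} (hA : HasExpDecay A)
    (hB : HasExpDecay B) (s : Finset κ) (X : κ → Matrix ι ι ℝ) :
    ∫ t in Ioi (0 : ℝ), exp (t • A) * (∑ k ∈ s, X k) * exp (t • B) =
      ∑ k ∈ s, ∫ t in Ioi (0 : ℝ), exp (t • A) * X k * exp (t • B) := by
  simp_rw [Finset.mul_sum, Finset.sum_mul]
  exact integral_finsetSum s fun k _ => hA.integrableOn_exp_mul_mul_exp hB (X k)

theorem exp_smul_transpose (A : Matrix ι ι ℝ) (t : ℝ) : (exp (t • A))ᵀ = exp (t • Aᵀ) := by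
  rw [← exp_transpose, transpose_smul]

theorem mul_exp_mul_mul_transpose [Fintype κ] (U A : Matrix ι ι ℝ) (B : Matrix ι κ ℝ) (t : ℝ) :
    (U * exp (t • A) * B) * (U * exp (t • A) * B)ᵀ =
      U * (exp (t • A) * (B * Bᵀ) * exp (t • Aᵀ)) * Uᵀ := by
  simp only [transpose_mul, exp_smul_transpose, Matrix.mul_assoc]

theorem HasExpDecay.integrableOn_mul_exp_mul_mul_transpose [Fintype κ] {A : Matrix ι ι ℝ}
    (hA : HasExpDecay A) (hAT : HasExpDecay Aᵀ) (U : Matrix ι ι ℝ) (B : Matrix ι κ ℝ) :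
    IntegrableOn (fun t : ℝ => (U * exp (t • A) * B) * (U * exp (t • A) * B)ᵀ) (Ioi 0) := by
  simp_rw [mul_exp_mul_mul_transpose]
  exact ((hA.integrableOn_exp_mul_mul_exp hAT (B * Bᵀ)).const_mul U).mul_const Uᵀ

theorem HasExpDecay.integral_mul_exp_mul_mul_transpose [Fintype κ] {A : Matrix ι ι ℝ}
    (hA : HasExpDecay A) (hAT : HasExpDecay Aᵀ) (U : Matrix ι ι ℝ) (B : Matrix ι κ ℝ) :
    ∫ t in Ioi (0 : ℝ), (U * exp (t • A) * B) * (U * exp (t • A) * B)ᵀ =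
      U * (∫ t in Ioi (0 : ℝ), exp (t • A) * (B * Bᵀ) * exp (t • Aᵀ)) * Uᵀ := by
  simp_rw [mul_exp_mul_mul_transpose]
  exact integral_mul_mul_of_integrable (hA.integrableOn_exp_mul_mul_exp hAT _) _ _

end Gramian

/-- Integral representation of the quadratic-output observability Gramian. -/
theorem qo_observability_gramian_integral {n m p : ℕ}
    (A : Matrix (Fin n) (Fin n) ℝ) (B : Matrix (Fin n) (Fin m) ℝ)
    (C : Matrix (Fin p) (Fin n) ℝ) (M : Fin p → Matrix (Fin n) (Fin n) ℝ)
    (hA : IsHurwitz A) (hM : ∀ k, (M k)ᵀ = M k)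
    (P : Matrix (Fin n) (Fin n) ℝ)
    (hP : A * P + P * Aᵀ + B * Bᵀ = 0)
    (Q : Matrix (Fin n) (Fin n) ℝ)
    (hQ : Aᵀ * Q + Q * A + Cᵀ * C + ∑ k, M k * P * M k = 0) :
    Q = (Matrix.of fun i j => ∫ τ in Set.Ioi (0 : ℝ),
          (NormedSpace.exp (τ • Aᵀ) * Cᵀ * C * NormedSpace.exp (τ • A)) i j)
      + ∑ k, Matrix.of fun i j =>
          ∫ τ₁ in Set.Ioi (0 : ℝ), ∫ τ₂ in Set.Ioi (0 : ℝ),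
            ((NormedSpace.exp (τ₁ • Aᵀ) * M k * NormedSpace.exp (τ₂ • A) * B) *
             (NormedSpace.exp (τ₁ • Aᵀ) * M k * NormedSpace.exp (τ₂ • A) * B)ᵀ) i j := by
  have hA₁ : HasExpDecay A := hA.hasExpDecay
  have hA₂ : HasExpDecay Aᵀ := hA.transpose.hasExpDecay
  have hPint : P = ∫ t in Ioi (0 : ℝ), exp (t • A) * (B * Bᵀ) * exp (t • Aᵀ) :=
    hA₁.eq_integral_of_mul_add_mul_add_eq_zero hA₂ hP
  have hQint : Q = ∫ t in Ioi (0 : ℝ), exp (t • Aᵀ) * (Cᵀ * C + ∑ k, M k * P * M k) * exp (t • A) :=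
    hA₂.eq_integral_of_mul_add_mul_add_eq_zero hA₁ (by rw [← add_assoc, hQ])
  have hinner : ∀ k (τ₁ : ℝ) i j, ∫ τ₂ in Ioi (0 : ℝ),
      ((exp (τ₁ • Aᵀ) * M k * exp (τ₂ • A) * B) * (exp (τ₁ • Aᵀ) * M k * exp (τ₂ • A) * B)ᵀ) i j =
        (exp (τ₁ • Aᵀ) * (M k * P * M k) * exp (τ₁ • A)) i j := fun k τ₁ i j => by
    rw [integral_apply_apply (hA₁.integrableOn_mul_exp_mul_mul_transpose hA₂ _ _),
      hA₁.integral_mul_exp_mul_mul_transpose hA₂, ← hPint, transpose_mul, hM, exp_smul_transpose,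
      transpose_transpose]
    simp only [Matrix.mul_assoc]
  simp_rw [hinner, Matrix.mul_assoc (exp _) Cᵀ C, hA₂.of_integral_apply_exp_mul_mul_exp hA₁]
  rw [hQint, hA₂.integral_exp_mul_add_mul_exp hA₁, hA₂.integral_exp_mul_sum_mul_exp hA₁]
end

section
/- Let A ∈ ℝ^{n×n} and A_r ∈ ℝ^{r×r} be Hurwitz, let X solve A X + X A_rᵀ + B B_rᵀ = 0, and let Z solve Aᵀ Z + Z A_r − Σ_{k=1}^p M_k X M_{k,r} − Cᵀ C_r = 0. Then −trace(Bᵀ Z B_r) = trace(C X C_rᵀ) + Σ_{k=1}^p trace(Xᵀ M_k X M_{k,r}). -/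
open Matrix

/-- Equality of the two Gramian-based trace formulas for the H2 inner product of two
LQO systems: `-trace(Bᵀ Z Bᵣ) = trace(C X Cᵣᵀ) + Σₖ trace(Xᵀ Mₖ X M_{k,r})`. -/
theorem h2_inner_product_trace_formulas {n r m p : ℕ}
    (A : Matrix (Fin n) (Fin n) ℝ) (Ar : Matrix (Fin r) (Fin r) ℝ)
    (B : Matrix (Fin n) (Fin m) ℝ) (Br : Matrix (Fin r) (Fin m) ℝ)
    (C : Matrix (Fin p) (Fin n) ℝ) (Cr : Matrix (Fin p) (Fin r) ℝ)
    (M : Fin p → Matrix (Fin n) (Fin n) ℝ) (Mr : Fin p → Matrix (Fin r) (Fin r) ℝ)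
    (hA : IsHurwitz A) (hAr : IsHurwitz Ar)
    (hM : ∀ k, (M k)ᵀ = M k) (hMr : ∀ k, (Mr k)ᵀ = Mr k)
    (X Z : Matrix (Fin n) (Fin r) ℝ)
    (hX : A * X + X * Arᵀ + B * Brᵀ = 0)
    (hZ : Aᵀ * Z + Z * Ar - (∑ k, M k * X * Mr k) - Cᵀ * Cr = 0) :
    -(Bᵀ * Z * Br).trace
      = (C * X * Crᵀ).trace + ∑ k, (Xᵀ * M k * X * Mr k).trace := by
  have h1 : B * Brᵀ = -(A * X + X * Arᵀ) := eq_neg_of_add_eq_zero_left (by rw [add_comm]; exact hX)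
  rw [sub_sub, sub_eq_zero] at hZ
  have key : (Bᵀ * Z * Br).trace = ((B * Brᵀ)ᵀ * Z).trace := by
    rw [trace_mul_comm, ← Matrix.mul_assoc, transpose_mul, transpose_transpose]
  calc -(Bᵀ * Z * Br).trace
      = ((A * X + X * Arᵀ)ᵀ * Z).trace := by
        rw [key, h1, transpose_neg, Matrix.neg_mul, trace_neg, neg_neg]
    _ = (Xᵀ * (Aᵀ * Z + Z * Ar)).trace := by
        rw [transpose_add, transpose_mul, transpose_mul, transpose_transpose,
          Matrix.add_mul, Matrix.mul_add, trace_add, trace_add, Matrix.mul_assoc]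
        congr 1
        rw [trace_mul_comm, ← Matrix.mul_assoc, trace_mul_comm]
    _ = (Xᵀ * ((∑ k, M k * X * Mr k) + Cᵀ * Cr)).trace := by rw [hZ]
    _ = (C * X * Crᵀ).trace + ∑ k, (Xᵀ * M k * X * Mr k).trace := by
        rw [Matrix.mul_add, trace_add, Matrix.mul_sum, trace_sum, add_comm]
        congr 1
        · rw [← trace_transpose (C * X * Crᵀ), transpose_mul, transpose_mul,
            transpose_transpose, trace_mul_comm, Matrix.mul_assoc, trace_mul_comm Cᵀ, Matrix.mul_assoc]
        · exact Finset.sum_congr rfl fun k _ => by rw [← Matrix.mul_assoc, ← Matrix.mul_assoc]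
end

section
/- Let A be Hurwitz, let P solve A P + P Aᵀ + B Bᵀ = 0, and let Q solve Aᵀ Q + Q A + Cᵀ C + Σ_{k=1}^p M_k P M_k = 0. Then trace(Bᵀ Q B) = trace(C P Cᵀ) + Σ_{k=1}^p trace(P M_k P M_k). -/
open Matrix

/-- The two Gramian-based formulas for the squared H2 norm of an LQO system agree:
`trace(Bᵀ Q B) = trace(C P Cᵀ) + Σₖ trace(P Mₖ P Mₖ)`. -/
theorem h2_norm_trace_formulas {n m p : ℕ}
    (A : Matrix (Fin n) (Fin n) ℝ) (B : Matrix (Fin n) (Fin m) ℝ)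
    (C : Matrix (Fin p) (Fin n) ℝ) (M : Fin p → Matrix (Fin n) (Fin n) ℝ)
    (hA : IsHurwitz A) (hM : ∀ k, (M k)ᵀ = M k)
    (P Q : Matrix (Fin n) (Fin n) ℝ)
    (hP : A * P + P * Aᵀ + B * Bᵀ = 0)
    (hQ : Aᵀ * Q + Q * A + Cᵀ * C + ∑ k, M k * P * M k = 0) :
    (Bᵀ * Q * B).trace = (C * P * Cᵀ).trace + ∑ k, (P * M k * P * M k).trace := by
  have hBB : B * Bᵀ = -(A * P + P * Aᵀ) := eq_neg_of_add_eq_zero_right hP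
  rw [add_assoc] at hQ
  have hCC : Cᵀ * C + ∑ k, M k * P * M k = -(Aᵀ * Q + Q * A) :=
    eq_neg_of_add_eq_zero_right hQ
  have hL : (Bᵀ * Q * B).trace = ((B * Bᵀ) * Q).trace := by
    rw [trace_mul_comm]; simp [Matrix.mul_assoc]
  have hR : (C * P * Cᵀ).trace + ∑ k, (P * M k * P * M k).trace
      = ((Cᵀ * C + ∑ k, M k * P * M k) * P).trace := by
    rw [Matrix.add_mul, trace_add, Finset.sum_mul, trace_sum]
    congr 1
    · rw [trace_mul_comm]; simp [Matrix.mul_assoc]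
    · refine Finset.sum_congr rfl fun k _ => ?_
      rw [trace_mul_comm (P * M k * P) (M k)]
      simp [Matrix.mul_assoc]
  rw [hL, hR, hBB, hCC, Matrix.neg_mul, Matrix.neg_mul, trace_neg, trace_neg,
    Matrix.add_mul, Matrix.add_mul, trace_add, trace_add]
  have h1 : (A * P * Q).trace = (Q * A * P).trace := by
    rw [trace_mul_comm]; simp [Matrix.mul_assoc]
  have h2 : (P * Aᵀ * Q).trace = (Aᵀ * Q * P).trace := by
    rw [trace_mul_comm (P * Aᵀ) Q, ← Matrix.mul_assoc, trace_mul_comm (Q * P) Aᵀ, ← Matrix.mul_assoc]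
  rw [h1, h2]
  ring
end

section
/- Assume the stationarity conditions C_r P_r − C X = 0 and P_r M_{k,r} P_r − Xᵀ M_k X = 0 hold for each k, with P_r ∈ ℝ^{r×r} invertible. Setting V_r = X P_r^{-1}, it follows that C_r = C V_r and M_{k,r} = V_rᵀ M_k V_r for each k. -/
open Matrix

/-- From the stationarity conditions `Cᵣ Pᵣ − C X = 0` and
`Pᵣ M_{k,r} Pᵣ − Xᵀ Mₖ X = 0` with `Pᵣ` symmetric invertible, the reduced output
matrices are obtained by Galerkin projection with `Vᵣ = X Pᵣ⁻¹`. -/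
theorem output_matrices_galerkin {n r p : ℕ}
    (C : Matrix (Fin p) (Fin n) ℝ) (Cr : Matrix (Fin p) (Fin r) ℝ)
    (M : Fin p → Matrix (Fin n) (Fin n) ℝ) (Mr : Fin p → Matrix (Fin r) (Fin r) ℝ)
    (hM : ∀ k, (M k)ᵀ = M k) (hMr : ∀ k, (Mr k)ᵀ = Mr k)
    (X : Matrix (Fin n) (Fin r) ℝ) (Pr : Matrix (Fin r) (Fin r) ℝ)
    (hPrsymm : Prᵀ = Pr) (hPr : IsUnit Pr.det)
    (hC : Cr * Pr - C * X = 0)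
    (hMcond : ∀ k, Pr * Mr k * Pr - Xᵀ * M k * X = 0) :
    Cr = C * (X * Pr⁻¹) ∧ ∀ k, Mr k = (X * Pr⁻¹)ᵀ * M k * (X * Pr⁻¹) := by
  have hinv : Pr * Pr⁻¹ = 1 := mul_nonsing_inv Pr hPr
  have hinv' : Pr⁻¹ * Pr = 1 := nonsing_inv_mul Pr hPr
  have hCeq : Cr * Pr = C * X := by
    have := sub_eq_zero.mp hC; exact this
  constructor
  · calc Cr = Cr * Pr * Pr⁻¹ := by rw [Matrix.mul_assoc, hinv, Matrix.mul_one]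
      _ = C * X * Pr⁻¹ := by rw [hCeq]
      _ = C * (X * Pr⁻¹) := by rw [Matrix.mul_assoc]
  · intro k
    have hMeq : Pr * Mr k * Pr = Xᵀ * M k * X := sub_eq_zero.mp (hMcond k)
    have ht : (X * Pr⁻¹)ᵀ = Pr⁻¹ * Xᵀ := by
      rw [transpose_mul, transpose_nonsing_inv, hPrsymm]
    rw [ht]
    calc Mr k = Pr⁻¹ * (Pr * Mr k * Pr) * Pr⁻¹ := by
          rw [← Matrix.mul_assoc, ← Matrix.mul_assoc, hinv', Matrix.one_mul, Matrix.mul_assoc, hinv, Matrix.mul_one]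
      _ = Pr⁻¹ * (Xᵀ * M k * X) * Pr⁻¹ := by rw [hMeq]
      _ = Pr⁻¹ * Xᵀ * M k * (X * Pr⁻¹) := by simp only [Matrix.mul_assoc]
end

section
/- Assume V_r, W_r ∈ ℝ^{n×r} satisfy W_rᵀ V_r = I_r, B_r = W_rᵀ B, P_r is symmetric invertible, X = V_r P_r solves A X + X A_rᵀ + B B_rᵀ = 0, and A_r P_r + P_r A_rᵀ + B_r B_rᵀ = 0. Then A_r = W_rᵀ A V_r. -/
open Matrix

/-- If `Wᵣᵀ Vᵣ = I`, `Bᵣ = Wᵣᵀ B`, `Pᵣ` is symmetric invertible, `X = Vᵣ Pᵣ` solves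
the Sylvester equation and `Pᵣ` solves the reduced Lyapunov equation, then
`Aᵣ = Wᵣᵀ A Vᵣ` is the Petrov–Galerkin projection of `A`. -/
theorem reduced_A_petrov_galerkin {n r m : ℕ}
    (A : Matrix (Fin n) (Fin n) ℝ) (Ar : Matrix (Fin r) (Fin r) ℝ)
    (B : Matrix (Fin n) (Fin m) ℝ) (Br : Matrix (Fin r) (Fin m) ℝ)
    (Vr Wr : Matrix (Fin n) (Fin r) ℝ)
    (Pr : Matrix (Fin r) (Fin r) ℝ)
    (hbi : Wrᵀ * Vr = 1) (hB : Br = Wrᵀ * B)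
    (hPrsymm : Prᵀ = Pr) (hPr : IsUnit Pr.det)
    (hX : A * (Vr * Pr) + (Vr * Pr) * Arᵀ + B * Brᵀ = 0)
    (hLyap : Ar * Pr + Pr * Arᵀ + Br * Brᵀ = 0) :
    Ar = Wrᵀ * A * Vr := by
  have h1 : Wrᵀ * (A * (Vr * Pr) + (Vr * Pr) * Arᵀ + B * Brᵀ) = 0 := by
    rw [hX, Matrix.mul_zero]
  have h2 : Wrᵀ * A * Vr * Pr + Pr * Arᵀ + Br * Brᵀ = 0 := by
    calc Wrᵀ * A * Vr * Pr + Pr * Arᵀ + Br * Brᵀ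
        = Wrᵀ * (A * (Vr * Pr) + (Vr * Pr) * Arᵀ + B * Brᵀ) := by
          rw [hB]
          have : Wrᵀ * (Vr * Pr) = Pr := by
            rw [← Matrix.mul_assoc, hbi, Matrix.one_mul]
          simp only [Matrix.mul_add, ← Matrix.mul_assoc, hbi, Matrix.one_mul]
      _ = 0 := h1
  have h3 : Wrᵀ * A * Vr * Pr = Ar * Pr := by
    have := h2.trans hLyap.symm
    have h4 : Wrᵀ * A * Vr * Pr + (Pr * Arᵀ + Br * Brᵀ)
        = Ar * Pr + (Pr * Arᵀ + Br * Brᵀ) := by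
      rw [← add_assoc, ← add_assoc]; exact this
    exact add_right_cancel h4
  have h5 := congrArg (· * Pr⁻¹) h3
  simpa [Matrix.mul_assoc, Matrix.mul_nonsing_inv Pr hPr] using h5.symm
end

section
/- Let A ∈ ℝ^{n×n}, A_r ∈ ℝ^{r×r} be Hurwitz and let X solve A X + X A_rᵀ + B B_rᵀ = 0. Consider a perturbation Δ_M ∈ ℝ^{r×r} of M_r (symmetric) for some fixed index k. Then the induced first-order perturbation Δ_Z in the solution of Aᵀ Z + Z A_r − M X M_r − Cᵀ C_r = 0 satisfies Aᵀ Δ_Z + Δ_Z A_r − M X Δ_Mᵀ = 0, and consequently trace(B_r Bᵀ Δ_Z) = −trace(Xᵀ M X Δ_M). -/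
open Matrix

/-- Perturbing the quadratic-output matrix `Mᵣ` by a symmetric `Δ_M` induces a
perturbation `Δ_Z = Z' − Z` of the Sylvester solution which satisfies
`Aᵀ Δ_Z + Δ_Z Aᵣ − M X Δ_Mᵀ = 0`, and consequently
`trace(Bᵣ Bᵀ Δ_Z) = −trace(Xᵀ M X Δ_M)`. -/
theorem gradient_Mr_key_step {n r m p : ℕ}
    (A : Matrix (Fin n) (Fin n) ℝ) (Ar : Matrix (Fin r) (Fin r) ℝ)
    (B : Matrix (Fin n) (Fin m) ℝ) (Br : Matrix (Fin r) (Fin m) ℝ)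
    (C : Matrix (Fin p) (Fin n) ℝ) (Cr : Matrix (Fin p) (Fin r) ℝ)
    (M : Matrix (Fin n) (Fin n) ℝ) (Mr : Matrix (Fin r) (Fin r) ℝ)
    (ΔM : Matrix (Fin r) (Fin r) ℝ)
    (hA : IsHurwitz A) (hAr : IsHurwitz Ar)
    (hM : Mᵀ = M) (hMr : Mrᵀ = Mr) (hΔM : ΔMᵀ = ΔM)
    (X : Matrix (Fin n) (Fin r) ℝ)
    (hX : A * X + X * Arᵀ + B * Brᵀ = 0)
    (Z Z' : Matrix (Fin n) (Fin r) ℝ)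
    (hZ : Aᵀ * Z + Z * Ar - M * X * Mr - Cᵀ * Cr = 0)
    (hZ' : Aᵀ * Z' + Z' * Ar - M * X * (Mr + ΔM) - Cᵀ * Cr = 0) :
    (Aᵀ * (Z' - Z) + (Z' - Z) * Ar - M * X * ΔMᵀ = 0) ∧
    (Br * Bᵀ * (Z' - Z)).trace = -((Xᵀ * M * X * ΔM).trace) := by
  have h2 : Aᵀ * (Z' - Z) + (Z' - Z) * Ar - M * X * ΔM = 0 := by
    calc Aᵀ * (Z' - Z) + (Z' - Z) * Ar - M * X * ΔM
        = (Aᵀ * Z' + Z' * Ar - M * X * (Mr + ΔM) - Cᵀ * Cr)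
          - (Aᵀ * Z + Z * Ar - M * X * Mr - Cᵀ * Cr) := by
          simp only [Matrix.mul_sub, Matrix.sub_mul, Matrix.mul_add]; abel
      _ = 0 := by rw [hZ, hZ']; simp
  have key : Aᵀ * (Z' - Z) + (Z' - Z) * Ar = M * X * ΔM := sub_eq_zero.mp h2
  refine ⟨by rw [hΔM]; exact h2, ?_⟩
  have hBB : B * Brᵀ = -(A * X + X * Arᵀ) := by
    rw [eq_neg_iff_add_eq_zero, add_comm]; exact hX
  have hBr : Br * Bᵀ = -(Xᵀ * Aᵀ + Ar * Xᵀ) := by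
    have h1 : Br * Bᵀ = (B * Brᵀ)ᵀ := by simp
    rw [h1, hBB]; simp [transpose_mul]
  have hr : Xᵀ * M * X * ΔM = Xᵀ * (Aᵀ * (Z' - Z) + (Z' - Z) * Ar) := by
    rw [Matrix.mul_assoc (Xᵀ * M) X ΔM, Matrix.mul_assoc Xᵀ M (X * ΔM),
      ← Matrix.mul_assoc M X ΔM, ← key]
  rw [hBr, hr]
  simp only [Matrix.neg_mul, trace_neg, neg_inj, Matrix.add_mul, Matrix.mul_add, trace_add]
  congr 1
  · rw [Matrix.mul_assoc]
  · rw [Matrix.mul_assoc, trace_mul_comm Ar (Xᵀ * (Z' - Z)), Matrix.mul_assoc]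
end

section
/- Let A_r ∈ ℝ^{r×r} be Hurwitz, P_r solve A_r P_r + P_r A_rᵀ + B_r B_rᵀ = 0, and for a symmetric perturbation direction Δ ∈ ℝ^{r×r} let Δ_Q solve A_rᵀ Δ_Q + Δ_Q A_r + M_r P_r Δᵀ + Δ P_r M_r = 0, where M_r is symmetric. Then trace(B_rᵀ Δ_Q B_r) = 2 trace(P_r M_r P_r Δ). -/
open Matrix

/-- Gramian term of the gradient with respect to `Mᵣ`: if `Pᵣ` solves the reduced
Lyapunov equation and `Δ_Q` solves
`Aᵣᵀ Δ_Q + Δ_Q Aᵣ + Mᵣ Pᵣ Δᵀ + Δ Pᵣ Mᵣ = 0` for a symmetric direction `Δ`, then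
`trace(Bᵣᵀ Δ_Q Bᵣ) = 2 trace(Pᵣ Mᵣ Pᵣ Δ)`. -/
theorem gradient_Mr_gramian_term {r m : ℕ}
    (Ar : Matrix (Fin r) (Fin r) ℝ) (Br : Matrix (Fin r) (Fin m) ℝ)
    (Mr Pr Δ ΔQ : Matrix (Fin r) (Fin r) ℝ)
    (hAr : IsHurwitz Ar)
    (hMr : Mrᵀ = Mr) (hPrsymm : Prᵀ = Pr) (hΔ : Δᵀ = Δ)
    (hPr : Ar * Pr + Pr * Arᵀ + Br * Brᵀ = 0)
    (hΔQ : Arᵀ * ΔQ + ΔQ * Ar + Mr * Pr * Δᵀ + Δ * Pr * Mr = 0) :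
    (Brᵀ * ΔQ * Br).trace = 2 * (Pr * Mr * Pr * Δ).trace := by
  have hBB : Br * Brᵀ = -(Ar * Pr) - Pr * Arᵀ := by
    linear_combination (norm := noncomm_ring) hPr
  have h1 : (Brᵀ * ΔQ * Br).trace = (Br * Brᵀ * ΔQ).trace := by
    rw [trace_mul_cycle]
  have h2 : ((Arᵀ * ΔQ + ΔQ * Ar + Mr * Pr * Δᵀ + Δ * Pr * Mr) * Pr).trace = 0 := by
    rw [hΔQ, zero_mul, trace_zero]
  have h3 : (Arᵀ * ΔQ * Pr).trace + (ΔQ * Ar * Pr).trace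
      + (Mr * Pr * Δᵀ * Pr).trace + (Δ * Pr * Mr * Pr).trace = 0 := by
    rw [← trace_add, ← trace_add, ← trace_add, ← add_mul, ← add_mul, ← add_mul]
    exact h2
  have e1 : (Arᵀ * ΔQ * Pr).trace = (Pr * Arᵀ * ΔQ).trace := by
    rw [trace_mul_cycle]
  have e2 : (ΔQ * Ar * Pr).trace = (Ar * Pr * ΔQ).trace := by
    rw [← trace_mul_cycle]
  have e3 : (Mr * Pr * Δᵀ * Pr).trace = (Pr * Mr * Pr * Δ).trace := by
    rw [hΔ, trace_mul_cycle, mul_assoc, mul_assoc, ← mul_assoc Pr, ← mul_assoc]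
  have e4 : (Δ * Pr * Mr * Pr).trace = (Pr * Mr * Pr * Δ).trace := by
    rw [trace_mul_cycle, mul_assoc, mul_assoc, ← mul_assoc Pr, trace_mul_comm, ← mul_assoc]
  have h4 : (Br * Brᵀ * ΔQ).trace
      = (Mr * Pr * Δᵀ * Pr).trace + (Δ * Pr * Mr * Pr).trace := by
    rw [hBB, sub_mul, neg_mul, trace_sub, trace_neg]
    rw [e1, e2] at h3
    linarith
  rw [h1, h4, e3, e4]; ring
end
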